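/- arXiv:1511.09455 — 4 statements merged into one kernel-verified Lean document; each statement's English description precedes it below -/
import Mathlib

section
/- For every nonempty binary tree B, the number of non-ambiguous trees of shape B equals |LV(B)|! · |RV(B)|! divided by ( ∏_{U a left child of B} EL(U) · ∏_{U a right child of B} ER(U) ). -/
inductive BT : Type where
  | nil : BT
  | node : BT → BT → BT
  deriving DecidableEq

namespace BT

/-- The list of positions (paths from the root, `false` = left step, `true` = right step)
of the vertices of a binary tree. -/
def paths : BT → List (List Bool)
  | .nil => []
  | .node l r => [] :: (l.paths.map (List.cons false) ++ r.paths.map (List.cons true))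

/-- Number of vertices. -/
def size (B : BT) : ℕ := B.paths.length

/-- The set of left children (positions ending with a left step). -/
def leftVertices (B : BT) : Finset (List Bool) :=
  B.paths.toFinset.filter (fun p => p.getLast? = some false)

/-- The set of right children (positions ending with a right step). -/
def rightVertices (B : BT) : Finset (List Bool) :=
  B.paths.toFinset.filter (fun p => p.getLast? = some true)

end BT

/-- A non-ambiguous tree of shape `B`: bijective labellings of the left (resp. right)
children by `Fin |LV B|` (resp. `Fin |RV B|`), decreasing along ancestry. -/
structure NAT (B : BT) where
  fL : {p // p ∈ B.leftVertices} → Fin B.leftVertices.card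
  fR : {p // p ∈ B.rightVertices} → Fin B.rightVertices.card
  bijL : Function.Bijective fL
  bijR : Function.Bijective fR
  ancL : ∀ u v : {p // p ∈ B.leftVertices}, u.1 <+: v.1 → u ≠ v → (fL v : ℕ) < fL u
  ancR : ∀ u v : {p // p ∈ B.rightVertices}, u.1 <+: v.1 → u ≠ v → (fR v : ℕ) < fR u

/-- `EL B u`: the number of left children of `B` in the subtree rooted at `u`
(counting `u` itself when `u` is a left child). -/
def EL (B : BT) (u : List Bool) : ℕ :=
  (B.leftVertices.filter (fun v => u <+: v)).card

/-- `ER B u`: the number of right children of `B` in the subtree rooted at `u`. -/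
def ER (B : BT) (u : List Bool) : ℕ :=
  (B.rightVertices.filter (fun v => u <+: v)).card

/-!
The left and the right labelling of a NAT are independent, so it suffices to count the decreasing
bijective labellings of a finite set `S` of words ordered by prefix, which is a forest. The vertex
carrying the largest label is a root of this forest, and deleting it leaves a decreasing labelling
of the rest, so their number `N(S)` satisfies `N(S) = ∑ N(S \ {r})` over the roots `r`. Deleting a
root does not change the hooks of the other vertices, and the hooks of the roots add up to `|S|`,
so induction on `|S|` gives `N(S) · ∏ hook = |S|!`.
-/

open Finset Function

section PrefixForest

variable {α : Type*} [DecidableEq α] {S : Finset (List α)} {r u v : List α}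

def hookLength (S : Finset (List α)) (u : List α) : ℕ := #(S.filter (u <+: ·))

theorem hookLength_pos (hu : u ∈ S) : 0 < hookLength S u :=
  card_pos.2 ⟨u, mem_filter.2 ⟨hu, List.prefix_refl u⟩⟩

def prefixRoots (S : Finset (List α)) : Finset (List α) :=
  S.filter fun r => ∀ u ∈ S, u <+: r → u = r

theorem mem_prefixRoots : r ∈ prefixRoots S ↔ r ∈ S ∧ ∀ u ∈ S, u <+: r → u = r :=
  mem_filter

theorem exists_mem_prefixRoots_prefix (hv : v ∈ S) : ∃ r ∈ prefixRoots S, r <+: v := by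
  obtain ⟨r, hr, hmin⟩ := (S.filter (· <+: v)).exists_min_image List.length ⟨v, by simp [hv]⟩
  obtain ⟨hrS, hrv⟩ := mem_filter.1 hr
  refine ⟨r, mem_prefixRoots.2 ⟨hrS, fun u hu hur => ?_⟩, hrv⟩
  exact hur.eq_of_length (hur.length_le.antisymm (hmin u (mem_filter.2 ⟨hu, hur.trans hrv⟩)))

theorem eq_of_mem_prefixRoots_of_prefix {r' : List α} (hr : r ∈ prefixRoots S)
    (hr' : r' ∈ prefixRoots S) (hrv : r <+: v) (hrv' : r' <+: v) : r = r' := by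
  rcases List.prefix_or_prefix_of_prefix hrv hrv' with h | h
  · exact (mem_prefixRoots.1 hr').2 r (mem_prefixRoots.1 hr).1 h
  · exact ((mem_prefixRoots.1 hr).2 r' (mem_prefixRoots.1 hr').1 h).symm

theorem sum_hookLength_prefixRoots (S : Finset (List α)) :
    ∑ r ∈ prefixRoots S, hookLength S r = #S := by
  have hbelow : ∀ v ∈ S, #((prefixRoots S).bipartiteBelow (· <+: ·) v) = 1 := by
    intro v hv
    obtain ⟨r, hr, hrv⟩ := exists_mem_prefixRoots_prefix hv
    refine card_eq_one.2 ⟨r, eq_singleton_iff_unique_mem.2 ⟨mem_filter.2 ⟨hr, hrv⟩, ?_⟩⟩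
    intro r' hr'
    exact eq_of_mem_prefixRoots_of_prefix (mem_filter.1 hr').1 hr (mem_filter.1 hr').2 hrv
  rw [card_eq_sum_ones, ← sum_congr rfl hbelow,
    ← sum_card_bipartiteAbove_eq_sum_card_bipartiteBelow]
  rfl

theorem hookLength_erase (hr : r ∈ prefixRoots S) (hu : u ∈ S.erase r) :
    hookLength (S.erase r) u = hookLength S u := by
  have hrS : r ∉ S.filter (u <+: ·) := fun h =>
    ne_of_mem_erase hu ((mem_prefixRoots.1 hr).2 u (mem_of_mem_erase hu) (mem_filter.1 h).2)
  rw [hookLength, filter_erase, erase_eq_of_notMem hrS, hookLength]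

theorem prod_hookLength_eq_mul_prod_erase (hr : r ∈ prefixRoots S) :
    ∏ u ∈ S, hookLength S u = hookLength S r * ∏ u ∈ S.erase r, hookLength (S.erase r) u := by
  rw [← mul_prod_erase S _ (mem_prefixRoots.1 hr).1]
  exact congrArg _ (prod_congr rfl fun u hu => (hookLength_erase hr hu).symm)

end PrefixForest

section Labelling

variable {α β : Type*} [DecidableEq α] [LinearOrder β] {S : Finset (List α)} {r : List α} {t : β}

abbrev DecreasingLabelling (S : Finset (List α)) (β : Type*) [LT β] :=
  {f : S → β // Bijective f ∧ ∀ u v : S, u.1 <+: v.1 → u ≠ v → f v < f u}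

namespace DecreasingLabelling

theorem mem_prefixRoots_of_forall_le (f : DecreasingLabelling S β) {u : S}
    (hu : ∀ y, y ≤ f.1 u) : u.1 ∈ prefixRoots S := by
  refine mem_prefixRoots.2 ⟨u.2, fun w hw hwu => by_contra fun hne => ?_⟩
  exact (f.2.2 ⟨w, hw⟩ u hwu (fun h => hne (Subtype.ext_iff.1 h))).not_ge (hu _)

def eraseRoot (hr : r ∈ S) (f : DecreasingLabelling S β) (hf : f.1 ⟨r, hr⟩ = t) :
    DecreasingLabelling (S.erase r) {y // y ≠ t} := by
  have hne : ∀ u : S, u.1 ≠ r → f.1 u ≠ t := fun u hu h =>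
    hu (Subtype.ext_iff.1 (f.2.1.1 (h.trans hf.symm)))
  refine ⟨fun u => ⟨f.1 ⟨u, mem_of_mem_erase u.2⟩, hne _ (ne_of_mem_erase u.2)⟩, ⟨?_, ?_⟩, ?_⟩
  · intro u v h
    simpa using f.2.1.1 (Subtype.ext_iff.1 h)
  · intro y
    obtain ⟨u, hu⟩ := f.2.1.2 y
    have hur : u.1 ≠ r := fun h => y.2 (hu ▸ (congrArg f.1 (Subtype.ext h)).trans hf)
    exact ⟨⟨u, mem_erase.2 ⟨hur, u.2⟩⟩, Subtype.ext hu⟩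
  · intro u v huv hne
    exact f.2.2 _ _ huv fun h => hne (Subtype.ext (Subtype.mk.inj h))

def insertRoot (hr : r ∈ prefixRoots S) (ht : ∀ y, y ≤ t)
    (g : DecreasingLabelling (S.erase r) {y // y ≠ t}) : DecreasingLabelling S β := by
  let f : S → β := fun u => if h : u.1 = r then t else g.1 ⟨u, mem_erase.2 ⟨h, u.2⟩⟩
  have hfr : ∀ u : S, u.1 = r → f u = t := fun u h => dif_pos h
  have hfg : ∀ u : S, (h : u.1 ≠ r) → f u = g.1 ⟨u, mem_erase.2 ⟨h, u.2⟩⟩ := fun u h => dif_neg h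
  refine ⟨f, ⟨fun u v huv => ?_, fun y => ?_⟩, fun u v huv hne => ?_⟩
  · by_cases hu : u.1 = r <;> by_cases hv : v.1 = r
    · exact Subtype.ext (hu.trans hv.symm)
    · rw [hfr u hu, hfg v hv] at huv
      exact absurd huv.symm (g.1 _).2
    · rw [hfg u hu, hfr v hv] at huv
      exact absurd huv (g.1 _).2
    · rw [hfg u hu, hfg v hv] at huv
      exact Subtype.ext (Subtype.mk.inj (g.2.1.1 (Subtype.ext huv)))
  · by_cases hy : y = t
    · exact ⟨⟨r, (mem_prefixRoots.1 hr).1⟩, (hfr _ rfl).trans hy.symm⟩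
    · obtain ⟨u, hu⟩ := g.2.1.2 ⟨y, hy⟩
      exact ⟨⟨u, mem_of_mem_erase u.2⟩,
        (hfg _ (ne_of_mem_erase u.2)).trans (congrArg Subtype.val hu)⟩
  · have hv : v.1 ≠ r := fun h =>
      hne (Subtype.ext (((mem_prefixRoots.1 hr).2 u u.2 (h ▸ huv)).trans h.symm))
    rw [hfg v hv]
    by_cases hu : u.1 = r
    · rw [hfr u hu]
      exact (ht _).lt_of_ne (g.1 _).2
    · rw [hfg u hu]
      exact g.2.2 _ _ huv fun h => hne (Subtype.ext (Subtype.mk.inj h))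

def eraseRootEquiv (hr : r ∈ prefixRoots S) (ht : ∀ y, y ≤ t) :
    {f : DecreasingLabelling S β // f.1 ⟨r, (mem_prefixRoots.1 hr).1⟩ = t} ≃
      DecreasingLabelling (S.erase r) {y // y ≠ t} where
  toFun f := eraseRoot _ f.1 f.2
  invFun g := ⟨insertRoot hr ht g, dif_pos rfl⟩
  left_inv f := by
    refine Subtype.ext (Subtype.ext (funext fun u => ?_))
    by_cases hu : u.1 = r
    · exact (dif_pos hu).trans (f.2.symm.trans (congrArg f.1.1 (Subtype.ext hu.symm)))
    · exact dif_neg hu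
  right_inv g := Subtype.ext (funext fun u => Subtype.ext (dif_neg (ne_of_mem_erase u.2)))

theorem card_eq_sum_prefixRoots [Finite β] (ht : ∀ y, y ≤ t) :
    Nat.card (DecreasingLabelling S β) =
      ∑ r ∈ prefixRoots S, Nat.card (DecreasingLabelling (S.erase r) {y // y ≠ t}) := by
  let root (f : DecreasingLabelling S β) : prefixRoots S :=
    ⟨((Equiv.ofBijective f.1 f.2.1).symm t).1,
      mem_prefixRoots_of_forall_le f
        fun y => (ht y).trans_eq (Equiv.ofBijective_apply_symm_apply f.1 f.2.1 t).symm⟩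
  have hroot (f : DecreasingLabelling S β) (r : prefixRoots S) :
      root f = r ↔ f.1 ⟨r, (mem_prefixRoots.1 r.2).1⟩ = t := by
    have : root f = r ↔ (Equiv.ofBijective f.1 f.2.1).symm t = ⟨r, (mem_prefixRoots.1 r.2).1⟩ := by
      simp [root, Subtype.ext_iff]
    rw [this, Equiv.symm_apply_eq, eq_comm]
    rfl
  calc Nat.card (DecreasingLabelling S β)
      = Nat.card (Σ r : prefixRoots S, {f // root f = r}) :=
        Nat.card_congr (Equiv.sigmaFiberEquiv root).symm
    _ = ∑ r : prefixRoots S, Nat.card (DecreasingLabelling (S.erase r) {y // y ≠ t}) := by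
        rw [Nat.card_sigma]
        exact sum_congr rfl fun r _ => Nat.card_congr
          ((Equiv.subtypeEquivRight (hroot · r)).trans (eraseRootEquiv r.2 ht))
    _ = _ := sum_coe_sort (prefixRoots S)
        fun r => Nat.card (DecreasingLabelling (S.erase r) {y // y ≠ t})

omit [DecidableEq α] in
theorem card_empty [IsEmpty β] :
    Nat.card (DecreasingLabelling (∅ : Finset (List α)) β) = 1 :=
  Nat.card_eq_one_iff_exists.2 ⟨⟨isEmptyElim, ⟨fun a => isEmptyElim a, isEmptyElim⟩,
    fun u => isEmptyElim u⟩, fun _ => Subtype.ext (funext isEmptyElim)⟩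

theorem card_mul_prod_hookLength (S : Finset (List α)) [Finite β]
    (hβ : Nat.card β = #S) :
    Nat.card (DecreasingLabelling S β) * ∏ u ∈ S, hookLength S u = (#S).factorial := by
  induction S using Finset.strongInduction generalizing β with | H S ih => ?_
  rcases S.eq_empty_or_nonempty with rfl | hS
  · have : IsEmpty β := Finite.card_eq_zero_iff.1 hβ
    simp [card_empty]
  have : Nonempty β := Nat.card_pos_iff.1 (hβ ▸ hS.card_pos) |>.1
  obtain ⟨t, ht⟩ : ∃ t : β, ∀ y, y ≤ t := Finite.exists_max id
  have hcard (r) (hr : r ∈ prefixRoots S) : Nat.card {y // y ≠ t} = #(S.erase r) := by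
    have := Nat.card_congr (Equiv.optionSubtypeNe t)
    rw [Finite.card_option, hβ] at this
    rw [card_erase_of_mem (mem_prefixRoots.1 hr).1]
    omega
  calc Nat.card (DecreasingLabelling S β) * ∏ u ∈ S, hookLength S u
      = ∑ r ∈ prefixRoots S, Nat.card (DecreasingLabelling (S.erase r) {y // y ≠ t}) *
          ∏ u ∈ S, hookLength S u := by
        rw [card_eq_sum_prefixRoots ht, sum_mul]
    _ = ∑ r ∈ prefixRoots S, hookLength S r * (#S - 1).factorial := sum_congr rfl fun r hr => by
        rw [prod_hookLength_eq_mul_prod_erase hr, mul_left_comm,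
          ih _ (erase_ssubset (mem_prefixRoots.1 hr).1) (hcard r hr),
          card_erase_of_mem (mem_prefixRoots.1 hr).1]
    _ = (#S).factorial := by
        rw [← sum_mul, sum_hookLength_prefixRoots, Nat.mul_factorial_pred hS.card_pos.ne']

end DecreasingLabelling

end Labelling

def NAT.equivDecreasingLabelling (B : BT) :
    NAT B ≃ DecreasingLabelling B.leftVertices (Fin #B.leftVertices) ×
      DecreasingLabelling B.rightVertices (Fin #B.rightVertices) where
  toFun T := (⟨T.fL, T.bijL, T.ancL⟩, ⟨T.fR, T.bijR, T.ancR⟩)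
  invFun f := ⟨f.1.1, f.2.1, f.1.2.1, f.2.2.1, f.1.2.2, f.2.2.2⟩
  left_inv _ := rfl
  right_inv _ := rfl

theorem EL_eq_hookLength (B : BT) (u : List Bool) : EL B u = hookLength B.leftVertices u := rfl

theorem ER_eq_hookLength (B : BT) (u : List Bool) : ER B u = hookLength B.rightVertices u := rfl

theorem nat_card_hook_formula_general (B : BT) :
    (Nat.card (NAT B) : ℚ) =
      ((B.leftVertices.card.factorial * B.rightVertices.card.factorial : ℕ) : ℚ) /
        ((∏ u ∈ B.leftVertices, (EL B u : ℚ)) * (∏ u ∈ B.rightVertices, (ER B u : ℚ))) := by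
  have hL := DecreasingLabelling.card_mul_prod_hookLength B.leftVertices (β := Fin _)
    (Nat.card_fin _)
  have hR := DecreasingLabelling.card_mul_prod_hookLength B.rightVertices (β := Fin _)
    (Nat.card_fin _)
  have hpos (S : Finset (List Bool)) : (0 : ℚ) < ∏ u ∈ S, (hookLength S u : ℚ) :=
    prod_pos fun u hu => Nat.cast_pos.2 (hookLength_pos hu)
  simp only [EL_eq_hookLength, ER_eq_hookLength]
  rw [Nat.card_congr (NAT.equivDecreasingLabelling B), Nat.card_prod, eq_div_iff
    (mul_pos (hpos _) (hpos _)).ne', ← hL, ← hR]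
  push_cast
  ring

/-- hook-length formula for NATs of a fixed shape. -/
theorem nat_card_hook_formula (B : BT) (hB : B ≠ BT.nil) :
    (Nat.card (NAT B) : ℚ) =
      ((B.leftVertices.card.factorial * B.rightVertices.card.factorial : ℕ) : ℚ) /
        ((∏ u ∈ B.leftVertices, (EL B u : ℚ)) * (∏ u ∈ B.rightVertices, (ER B u : ℚ))) :=
  nat_card_hook_formula_general B
end

section
/- For all natural numbers w, h, the number of non-ambiguous trees of nonempty shape having exactly w left children and h right children equals Σ_{p≥1} (p−1)! · p! · S(w+1, p) · S(h+1, p), where S(n,p) is the Stirling number of the second kind (the sum is finite since S(n,p)=0 for p>n). -/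
/-- Stirling numbers of the second kind: `stirling2 n p` is the number of partitions of an
`n`-element set into `p` nonempty blocks (via the standard recurrence). -/
def stirling2 : ℕ → ℕ → ℕ
  | 0, 0 => 1
  | 0, _ + 1 => 0
  | _ + 1, 0 => 0
  | n + 1, p + 1 => (p + 1) * stirling2 n (p + 1) + stirling2 n p

open Finset Nat

lemma sum_range_eq_of_le {M : Type*} [AddCommMonoid M] {f : ℕ → M} {n N : ℕ} (hnN : n ≤ N)
    (hf : ∀ s, n < s → f s = 0) :
    ∑ s ∈ range (n + 1), f s = ∑ s ∈ range (N + 1), f s :=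
  sum_subset (range_subset_range.2 (by omega)) fun s _ hs => hf s (by simpa using hs)

lemma sum_range_sum_range_comp_add {M : Type*} [AddCommMonoid M] {K : ℕ} (G : ℕ → M)
    (hG : ∀ m, K ≤ m → G m = 0) :
    ∑ s ∈ range K, ∑ t ∈ range K, G (s + t) = ∑ m ∈ range K, (m + 1) • G m := by
  have inner : ∀ s ∈ range K, ∑ t ∈ range K, G (s + t) = ∑ m ∈ Ico s K, G m := by
    intro s hs
    rw [sum_Ico_eq_sum_range]
    refine (sum_subset (range_subset_range.2 (by omega)) fun t _ ht => hG _ ?_).symm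
    simp only [mem_range] at hs ht
    omega
  rw [sum_congr rfl inner, sum_comm' (t' := range K) (s' := fun m => range (m + 1))]
  · simp
  · intro s m
    simp only [mem_range, mem_Ico]
    omega

theorem stirling2_eq_stirlingSecond : stirling2 = stirlingSecond := by
  funext n k
  induction n generalizing k with
  | zero => cases k <;> rfl
  | succ n ih => cases k <;> simp [stirling2, stirlingSecond, ih]

def stirlingConv (w k q : ℕ) : ℕ :=
  ∑ a ∈ range (w + 1), w.choose a * (stirlingSecond (a + 1) k * stirlingSecond (w - a) q)

lemma stirlingConv_zero_right (w k : ℕ) : stirlingConv w k 0 = stirlingSecond (w + 1) k := by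
  rw [stirlingConv, sum_range_succ, sum_eq_zero fun a ha => ?_]
  · simp
  · obtain ⟨c, hc⟩ : ∃ c, w - a = c + 1 := ⟨w - a - 1, by rw [mem_range] at ha; omega⟩
    simp [hc]

lemma stirlingConv_succ (w p q : ℕ) :
    stirlingConv (w + 1) (p + 1) (q + 1) = (p + 1 + (q + 1)) * stirlingConv w (p + 1) (q + 1) +
      stirlingConv w p (q + 1) + stirlingConv w (p + 1) q := by
  have pascal := sum_choose_succ_mul (R := ℕ)
    (fun a b => stirlingSecond (a + 1) (p + 1) * stirlingSecond b (q + 1)) w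
  simp only [Nat.cast_id] at pascal
  calc _ = ∑ a ∈ range (w + 1), w.choose a * (stirlingSecond (a + 1) (p + 1) *
            stirlingSecond (w - a + 1) (q + 1)) +
          ∑ a ∈ range (w + 1), w.choose a * (stirlingSecond (a + 1 + 1) (p + 1) *
            stirlingSecond (w - a) (q + 1)) := by
        rw [stirlingConv, pascal]
        congr 1
        refine sum_congr rfl fun a ha => ?_
        rw [show w + 1 - a = w - a + 1 by rw [mem_range] at ha; omega]
    _ = _ := by
        simp only [stirlingConv, stirlingSecond_succ_succ (w - _) q,
          stirlingSecond_succ_succ (_ + 1) p, mul_sum, ← sum_add_distrib]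
        exact sum_congr rfl fun a _ => by ring

lemma stirlingConv_eq (w p q : ℕ) :
    stirlingConv w (p + 1) q = (p + q).choose p * stirlingSecond (w + 1) (p + q + 1) := by
  induction w generalizing p q with
  | zero => cases q <;> simp [stirlingConv, stirlingSecond_eq_zero_of_lt]
  | succ w ih =>
    rcases q with _ | q
    · simp [stirlingConv_zero_right]
    rw [stirlingConv_succ, ih, ih, stirlingSecond_succ_succ (w + 1)]
    rcases p with _ | p
    · simp only [stirlingConv, stirlingSecond_succ_zero, zero_mul, mul_zero, sum_const_zero,
        choose_zero_right, zero_add]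
      ring
    · rw [ih, show p + 1 + (q + 1) = p + q + 1 + 1 by ring, show p + (q + 1) = p + q + 1 by ring,
        show p + 1 + q = p + q + 1 by ring, choose_succ_succ' (p + q + 1) p]
      ring

/-- `k! S(n, k)` counts surjections from an `n`-set onto a `k`-set, and `k! S(n + 1, k + 1)`
those from an `(n + 1)`-set onto a `(k + 1)`-set sending a given point to a given point. -/
def surjCount (n k : ℕ) : ℕ := k ! * stirlingSecond n k

def pointedSurjCount (n k : ℕ) : ℕ := k ! * stirlingSecond (n + 1) (k + 1)

lemma pointedSurjCount_eq_zero {n k : ℕ} (h : n < k) : pointedSurjCount n k = 0 := by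
  rw [pointedSurjCount, stirlingSecond_eq_zero_of_lt (by omega), mul_zero]

lemma surjCount_eq_zero {n k : ℕ} (h : n < k) : surjCount n k = 0 := by
  rw [surjCount, stirlingSecond_eq_zero_of_lt h, mul_zero]

lemma sum_choose_mul_pointedSurjCount_mul_surjCount (w p q : ℕ) :
    ∑ a ∈ range (w + 1), w.choose a * (pointedSurjCount a p * surjCount (w - a) q) =
      pointedSurjCount w (p + q) := by
  calc _ = p ! * q ! * stirlingConv w (p + 1) q := by
        rw [stirlingConv, mul_sum]
        exact sum_congr rfl fun a _ => by simp only [pointedSurjCount, surjCount]; ring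
    _ = _ := by
        rw [stirlingConv_eq, pointedSurjCount,
          ← choose_mul_factorial_mul_factorial (le_add_right p q), add_tsub_cancel_left]
        ring

def stirlingSum (w h : ℕ) : ℕ :=
  ∑ s ∈ range (w + 1), (s + 1) * (pointedSurjCount w s * pointedSurjCount h s)

lemma stirlingSum_eq_sum_range {w h N : ℕ} (hN : w ≤ N) :
    stirlingSum w h =
      ∑ s ∈ range (N + 1), (s + 1) * (pointedSurjCount w s * pointedSurjCount h s) :=
  sum_range_eq_of_le hN fun s hs => by rw [pointedSurjCount_eq_zero hs, zero_mul, mul_zero]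

lemma stirlingSum_comm (w h : ℕ) : stirlingSum w h = stirlingSum h w := by
  rw [stirlingSum_eq_sum_range (le_max_left w h), stirlingSum_eq_sum_range (le_max_right w h)]
  exact sum_congr rfl fun s _ => by ring

def mixedSum (a b : ℕ) : ℕ :=
  ∑ s ∈ range (a + 1), pointedSurjCount a s * surjCount b s

lemma mixedSum_zero_left (b : ℕ) : mixedSum 0 b = if b = 0 then 1 else 0 := by
  cases b <;> simp [mixedSum, pointedSurjCount, surjCount, stirlingSecond_self]

lemma mixedSum_succ_left (a b : ℕ) : mixedSum (a + 1) b = stirlingSum a b := by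
  let f s := (s + 1) * (s ! * stirlingSecond (a + 1) (s + 1)) * (s ! * stirlingSecond b s)
  let g s := s ! * stirlingSecond (a + 1) s * (s ! * stirlingSecond b s)
  have hf : f (a + 1) = 0 := by simp [f, stirlingSecond_eq_zero_of_lt]
  have hg : g 0 = 0 := by simp [g]
  calc mixedSum (a + 1) b = ∑ s ∈ range (a + 2), (f s + g s) := sum_congr rfl fun s _ => by
          simp only [f, g, pointedSurjCount, surjCount, stirlingSecond_succ_succ (a + 1) s]; ring
    _ = ∑ s ∈ range (a + 1), (f s + g (s + 1)) := by
          rw [sum_add_distrib, sum_range_succ f, sum_range_succ' g, hf, hg, sum_add_distrib]; ring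
    _ = stirlingSum a b := sum_congr rfl fun s _ => by
          simp only [f, g, pointedSurjCount, stirlingSecond_succ_succ b s, factorial_succ]; ring

lemma mixedSum_eq_sum_range_of_le_left {a b N : ℕ} (hN : a ≤ N) :
    mixedSum a b = ∑ s ∈ range (N + 1), pointedSurjCount a s * surjCount b s :=
  sum_range_eq_of_le hN fun s hs => by rw [pointedSurjCount_eq_zero hs, zero_mul]

lemma mixedSum_eq_sum_range_of_le_right {a b N : ℕ} (hN : b ≤ N) :
    mixedSum a b = ∑ s ∈ range (N + 1), pointedSurjCount a s * surjCount b s := by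
  rw [mixedSum_eq_sum_range_of_le_left (le_max_left a N), ← sum_range_eq_of_le (le_max_right a N)]
  intro s hs
  rw [surjCount_eq_zero (by omega), mul_zero]

lemma stirlingSum_eq_sum_choose_mul_mixedSum (w h : ℕ) :
    stirlingSum w h = ∑ a ∈ range (w + 1), ∑ b ∈ range (h + 1),
      w.choose a * h.choose b * (mixedSum a (h - b) * mixedSum b (w - a)) := by
  set F := fun a b s t => w.choose a * (pointedSurjCount a s * surjCount (w - a) t) *
    (h.choose b * (pointedSurjCount b t * surjCount (h - b) s))
  have hG : ∀ m, w + 1 ≤ m → pointedSurjCount w m * pointedSurjCount h m = 0 := fun m hm => by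
    rw [pointedSurjCount_eq_zero (by omega), zero_mul]
  calc stirlingSum w h
      = ∑ s ∈ range (w + 1), ∑ t ∈ range (w + 1),
          pointedSurjCount w (s + t) * pointedSurjCount h (s + t) := by
        simp only [sum_range_sum_range_comp_add _ hG, stirlingSum, smul_eq_mul]
    _ = ∑ s ∈ range (w + 1), ∑ t ∈ range (w + 1),
          ∑ a ∈ range (w + 1), ∑ b ∈ range (h + 1), F a b s t := by
        refine sum_congr rfl fun s _ => sum_congr rfl fun t _ => ?_
        rw [← sum_choose_mul_pointedSurjCount_mul_surjCount w s t, add_comm s t,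
          ← sum_choose_mul_pointedSurjCount_mul_surjCount h t s, sum_mul_sum]
    _ = ∑ a ∈ range (w + 1), ∑ b ∈ range (h + 1),
          ∑ s ∈ range (w + 1), ∑ t ∈ range (w + 1), F a b s t := by
        simpa only [sum_product] using sum_comm (s := range (w + 1) ×ˢ range (w + 1))
          (t := range (w + 1) ×ˢ range (h + 1)) (f := fun st ab => F ab.1 ab.2 st.1 st.2)
    _ = _ := by
        refine sum_congr rfl fun a ha => sum_congr rfl fun b _ => ?_
        rw [mem_range] at ha
        rw [mixedSum_eq_sum_range_of_le_left (N := w) (by omega),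
          mixedSum_eq_sum_range_of_le_right (N := w) (by omega), sum_mul_sum]
        simp only [mul_sum]
        exact sum_congr rfl fun s _ => sum_congr rfl fun t _ => by simp only [F]; ring

lemma sum_Icc_stirling2_eq_stirlingSum (w h : ℕ) :
    ∑ p ∈ Icc 1 (w + 1), (p - 1)! * p ! * stirling2 (w + 1) p * stirling2 (h + 1) p =
      stirlingSum w h := by
  rw [← Ico_add_one_right_eq_Icc, sum_Ico_eq_sum_range, stirlingSum, stirling2_eq_stirlingSecond]
  refine sum_congr (by simp) fun s _ => ?_
  rw [add_comm 1 s, add_tsub_cancel_right, pointedSurjCount, pointedSurjCount, factorial_succ]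
  ring

section EraseMax

variable {α : Type*} [LinearOrder α] [OrderBot α] {s : Finset α} {x : α}

def eraseMax (s : Finset α) : Finset α := s.erase (s.sup id)

lemma sup_id_mem (hs : s.Nonempty) : s.sup id ∈ s := by
  simpa using sup_mem_of_nonempty (f := id) hs

lemma eraseMax_subset (s : Finset α) : eraseMax s ⊆ s := erase_subset _ _

lemma sup_notMem_eraseMax (s : Finset α) : s.sup id ∉ eraseMax s := notMem_erase _ _

lemma lt_sup_of_mem_eraseMax (hx : x ∈ eraseMax s) : x < s.sup id :=
  lt_of_le_of_ne (le_sup (f := id) (eraseMax_subset s hx)) (ne_of_mem_erase hx)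

lemma mem_eraseMax_of_lt (hx : x ∈ s) (hlt : x < s.sup id) : x ∈ eraseMax s :=
  mem_erase.2 ⟨hlt.ne, hx⟩

lemma card_eraseMax (hs : s.Nonempty) : #(eraseMax s) = #s - 1 :=
  card_erase_of_mem (sup_id_mem hs)

end EraseMax

section BijOnRange

variable {α : Type*} {s : Finset α} {n : ℕ}

lemma bijOn_dite_val [DecidableEq α] {f : s → Fin n} (hf : f.Bijective) :
    Set.BijOn (fun a => if h : a ∈ s then (f ⟨a, h⟩ : ℕ) else 0) s (range n) := by
  refine Set.BijOn.mk (fun a ha => ?_) (fun a ha a' ha' he => ?_) (fun k hk => ?_)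
  · simp [dif_pos (mem_coe.1 ha)]
  · simp only [dif_pos (mem_coe.1 ha), dif_pos (mem_coe.1 ha')] at he
    exact congrArg Subtype.val (hf.1 (Fin.ext he))
  · obtain ⟨⟨a, ha⟩, hfa⟩ := hf.2 ⟨k, by simpa using hk⟩
    exact ⟨a, ha, by simp [dif_pos ha, hfa]⟩

lemma bijective_finCodRestrict {g : α → ℕ} (hg : Set.BijOn g s (range n)) :
    Function.Bijective fun a : s => (⟨g a, mem_range.1 (hg.mapsTo a.2)⟩ : Fin n) := by
  refine ⟨fun a a' he => Subtype.ext (hg.injOn a.2 a'.2 (congrArg Fin.val he)), fun k => ?_⟩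
  obtain ⟨a, ha, hga⟩ := hg.surjOn (mem_range.2 k.2)
  exact ⟨⟨a, ha⟩, Fin.ext hga⟩

end BijOnRange

namespace BT

def vertices (B : BT) (b : Bool) : Finset (List Bool) :=
  B.paths.toFinset.filter (fun p => p.getLast? = some b)

def child : BT → Bool → BT
  | nil, _ => nil
  | node L R, b => bif b then R else L

@[simp] lemma vertices_nil (b : Bool) : nil.vertices b = ∅ := rfl

lemma eq_node_child {B : BT} (hB : B ≠ nil) : B = node (B.child false) (B.child true) := by
  cases B
  · exact absurd rfl hB
  · rfl

lemma nil_mem_paths_iff {B : BT} : [] ∈ B.paths ↔ B ≠ nil := by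
  cases B <;> simp [paths]

lemma cons_mem_paths_iff {B : BT} {d : Bool} {q : List Bool} :
    d :: q ∈ B.paths ↔ q ∈ (B.child d).paths := by
  cases B <;> cases d <;> simp [paths, child]

lemma nil_notMem_vertices (B : BT) (b : Bool) : [] ∉ B.vertices b := by
  simp [vertices]

lemma ne_nil_of_mem_vertices {B : BT} {b : Bool} {p : List Bool} (hp : p ∈ B.vertices b) :
    p ≠ [] := by
  rintro rfl
  exact nil_notMem_vertices B b hp

lemma singleton_mem_vertices_iff {B : BT} {b d : Bool} :
    [d] ∈ B.vertices b ↔ d = b ∧ B.child d ≠ nil := by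
  simp [vertices, cons_mem_paths_iff, nil_mem_paths_iff, and_comm]

lemma cons_mem_vertices_iff {B : BT} {b d : Bool} {q : List Bool} (hq : q ≠ []) :
    d :: q ∈ B.vertices b ↔ q ∈ (B.child d).vertices b := by
  obtain ⟨x, q, rfl⟩ := List.exists_cons_of_ne_nil hq
  simp [vertices, cons_mem_paths_iff]

lemma cons_mem_vertices {B : BT} {b d : Bool} {q : List Bool} (hq : q ∈ (B.child d).vertices b) :
    d :: q ∈ B.vertices b :=
  (cons_mem_vertices_iff (ne_nil_of_mem_vertices hq)).2 hq

/-- Labels are total functions on positions, vanishing off the vertices, so that a labelling is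
determined by `lab`. -/
@[ext] structure Labelling (B : BT) (S : Bool → Finset ℕ) where
  lab : Bool → List Bool → ℕ
  lab_eq_zero : ∀ b p, p ∉ B.vertices b → lab b p = 0
  bijOn : ∀ b, Set.BijOn (lab b) (B.vertices b) (S b)
  lab_lt_of_prefix : ∀ b, ∀ u ∈ B.vertices b, ∀ v ∈ B.vertices b, u <+: v → u ≠ v →
    lab b v < lab b u

abbrev LabelledTree (S : Bool → Finset ℕ) := Σ B : BT, B.Labelling S

namespace Labelling

variable {B : BT} {S S' : Bool → Finset ℕ}

lemma lab_mem (ℓ : B.Labelling S) {b : Bool} {p : List Bool} (hp : p ∈ B.vertices b) :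
    ℓ.lab b p ∈ S b :=
  (ℓ.bijOn b).mapsTo hp

lemma card_vertices (ℓ : B.Labelling S) (b : Bool) : #(B.vertices b) = #(S b) :=
  (ℓ.bijOn b).finsetCard_eq

def copy (ℓ : B.Labelling S) (h : S = S') : B.Labelling S' :=
  ⟨ℓ.lab, ℓ.lab_eq_zero, h ▸ ℓ.bijOn, ℓ.lab_lt_of_prefix⟩

lemma eq_empty_of_nil (ℓ : nil.Labelling S) (b : Bool) : S b = ∅ := by
  simpa using (ℓ.bijOn b).image_eq.symm

end Labelling

lemma LabelledTree.ext {S : Bool → Finset ℕ} {x y : LabelledTree S} (h₁ : x.1 = y.1)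
    (h₂ : x.2.lab = y.2.lab) : x = y := by
  obtain ⟨B, ℓ⟩ := x
  obtain ⟨B', ℓ'⟩ := y
  cases h₁
  cases Labelling.ext h₂
  rfl

instance subsingleton_nil (S : Bool → Finset ℕ) :
    Subsingleton {x : LabelledTree S // x.1 = nil} :=
  ⟨fun ⟨⟨B, ℓ⟩, hB⟩ ⟨⟨B', ℓ'⟩, hB'⟩ => by
    cases hB
    cases hB'
    refine Subtype.ext (LabelledTree.ext rfl (funext₂ fun b p => ?_))
    rw [ℓ.lab_eq_zero b p (by simp), ℓ'.lab_eq_zero b p (by simp)]⟩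

lemma card_labelledTree_nil (S : Bool → Finset ℕ) :
    Nat.card {x : LabelledTree S // x.1 = nil} = if ∀ b, S b = ∅ then 1 else 0 := by
  split_ifs with hS
  · have : Nonempty {x : LabelledTree S // x.1 = nil} :=
      ⟨⟨nil, ⟨fun _ _ => 0, fun _ _ _ => rfl, fun b => by simp [hS b],
        fun b u hu => by simp at hu⟩⟩, rfl⟩
    exact Nat.card_eq_one_iff_unique.2 ⟨inferInstance, this⟩
  · have : IsEmpty {x : LabelledTree S // x.1 = nil} :=
      ⟨fun ⟨⟨B, ℓ⟩, hB⟩ => by cases hB; exact hS ℓ.eq_empty_of_nil⟩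
    exact Nat.card_of_isEmpty

/-- The label sets inherited by the subtree below the `c`-child of the root, when `A b` is the
set of labels of the `b`-children lying below the `b`-child of the root: the `c`-children there
lose the label of the root's `c`-child, the other children take all labels outside `A`. -/
def childLabels (S A : Bool → Finset ℕ) (c b : Bool) : Finset ℕ :=
  if b = c then eraseMax (A b) else S b \ A b

lemma childLabels_subset {S A : Bool → Finset ℕ} (hA : ∀ b, A b ⊆ S b) (c b : Bool) :
    childLabels S A c b ⊆ S b := by
  unfold childLabels
  split_ifs
  · exact (eraseMax_subset _).trans (hA b)
  · exact sdiff_subset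

lemma sup_notMem_childLabels {S A : Bool → Finset ℕ} {b : Bool} (hA : (A b).Nonempty)
    (c : Bool) :
    (A b).sup id ∉ childLabels S A c b := by
  unfold childLabels
  split_ifs
  · exact sup_notMem_eraseMax _
  · exact fun h => (mem_sdiff.1 h).2 (sup_id_mem hA)

lemma disjoint_childLabels (S A : Bool → Finset ℕ) {c d : Bool} (hcd : c ≠ d) (b : Bool) :
    Disjoint (childLabels S A c b) (childLabels S A d b) := by
  unfold childLabels
  by_cases hc : b = c
  · subst hc
    rw [if_pos rfl, if_neg hcd]
    exact disjoint_sdiff_self_right.mono_left (eraseMax_subset _)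
  · rw [if_neg hc]
    by_cases hd : b = d
    · subst hd
      rw [if_pos rfl]
      exact disjoint_sdiff_self_left.mono_right (eraseMax_subset _)
    · exact (hcd (by cases b <;> cases c <;> cases d <;> simp_all)).elim

lemma exists_mem_childLabels {S A : Bool → Finset ℕ} {b : Bool} {x : ℕ} (hx : x ∈ S b)
    (hne : x ∈ A b → x ≠ (A b).sup id) : ∃ c, x ∈ childLabels S A c b := by
  by_cases hxA : x ∈ A b
  · exact ⟨b, by rw [childLabels, if_pos rfl]; exact mem_erase.2 ⟨hne hxA, hxA⟩⟩
  · exact ⟨!b, by simp [childLabels, hx, hxA]⟩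

namespace Labelling

variable {B : BT} {S : Bool → Finset ℕ} (ℓ : B.Labelling S)

def ownLabels (b : Bool) : Finset ℕ :=
  ((B.vertices b).filter (fun p => p.head? = some b)).image (ℓ.lab b)

lemma mem_ownLabels {b : Bool} {x : ℕ} :
    x ∈ ℓ.ownLabels b ↔ ∃ q, b :: q ∈ B.vertices b ∧ ℓ.lab b (b :: q) = x := by
  simp only [ownLabels, mem_image, mem_filter]
  constructor
  · rintro ⟨p, ⟨hp, hhead⟩, rfl⟩
    obtain ⟨d, q, rfl⟩ := List.exists_cons_of_ne_nil (ne_nil_of_mem_vertices hp)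
    obtain rfl : d = b := by simpa using hhead
    exact ⟨q, hp, rfl⟩
  · rintro ⟨q, hq, rfl⟩
    exact ⟨b :: q, ⟨hq, rfl⟩, rfl⟩

lemma ownLabels_subset (b : Bool) : ℓ.ownLabels b ⊆ S b := fun _ hx => by
  obtain ⟨q, hq, rfl⟩ := ℓ.mem_ownLabels.1 hx
  exact ℓ.lab_mem hq

lemma lab_cons_lt_lab_singleton {b : Bool} {q : List Bool} (hq : q ∈ (B.child b).vertices b) :
    ℓ.lab b (b :: q) < ℓ.lab b [b] :=
  ℓ.lab_lt_of_prefix b [b] (singleton_mem_vertices_iff.2 ⟨rfl, fun h => by simp [h] at hq⟩) _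
    (cons_mem_vertices hq) ⟨q, rfl⟩ (by simpa using (ne_nil_of_mem_vertices hq).symm)

lemma lab_singleton {b : Bool} (h : [b] ∈ B.vertices b) :
    ℓ.lab b [b] = (ℓ.ownLabels b).sup id := by
  refine le_antisymm (le_sup (f := id) (ℓ.mem_ownLabels.2 ⟨[], h, rfl⟩)) (Finset.sup_le ?_)
  intro x hx
  obtain ⟨q, hq, rfl⟩ := ℓ.mem_ownLabels.1 hx
  rcases eq_or_ne q [] with rfl | hq₀
  · exact le_rfl
  · exact (ℓ.lab_cons_lt_lab_singleton ((cons_mem_vertices_iff hq₀).1 hq)).le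

lemma child_eq_nil_iff (b : Bool) : B.child b = nil ↔ ℓ.ownLabels b = ∅ := by
  refine ⟨fun h => eq_empty_of_forall_notMem fun x hx => ?_, fun h => by_contra fun hb => ?_⟩
  · obtain ⟨q, hq, -⟩ := ℓ.mem_ownLabels.1 hx
    rcases eq_or_ne q [] with rfl | hq₀
    · exact (singleton_mem_vertices_iff.1 hq).2 h
    · simpa [h] using (cons_mem_vertices_iff hq₀).1 hq
  · have := ℓ.mem_ownLabels.2 ⟨[], singleton_mem_vertices_iff.2 ⟨rfl, hb⟩, rfl⟩
    simp [h] at this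

lemma lab_cons_mem_childLabels {b c : Bool} {q : List Bool} (hq : q ∈ (B.child c).vertices b) :
    ℓ.lab b (c :: q) ∈ childLabels S ℓ.ownLabels c b := by
  have hv := cons_mem_vertices hq
  unfold childLabels
  split_ifs with hbc
  · subst hbc
    refine mem_eraseMax_of_lt (ℓ.mem_ownLabels.2 ⟨q, hv, rfl⟩) ?_
    rw [← ℓ.lab_singleton (singleton_mem_vertices_iff.2 ⟨rfl, fun h => by simp [h] at hq⟩)]
    exact ℓ.lab_cons_lt_lab_singleton hq
  · refine mem_sdiff.2 ⟨ℓ.lab_mem hv, fun hx => ?_⟩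
    obtain ⟨q', hq', he⟩ := ℓ.mem_ownLabels.1 hx
    exact hbc (List.cons_eq_cons.1 ((ℓ.bijOn b).injOn hq' hv he)).1

lemma surjOn_childLabels {b c : Bool} {x : ℕ} (hx : x ∈ childLabels S ℓ.ownLabels c b) :
    ∃ q ∈ (B.child c).vertices b, ℓ.lab b (c :: q) = x := by
  unfold childLabels at hx
  split_ifs at hx with hbc
  · subst hbc
    obtain ⟨q, hq, rfl⟩ := ℓ.mem_ownLabels.1 (eraseMax_subset _ hx)
    rcases eq_or_ne q [] with rfl | hq₀
    · exact absurd hx (ℓ.lab_singleton hq ▸ sup_notMem_eraseMax _)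
    · exact ⟨q, (cons_mem_vertices_iff hq₀).1 hq, rfl⟩
  · obtain ⟨hxS, hxA⟩ := mem_sdiff.1 hx
    obtain ⟨p, hp, rfl⟩ := (ℓ.bijOn b).surjOn hxS
    obtain ⟨d, q, rfl⟩ := List.exists_cons_of_ne_nil (ne_nil_of_mem_vertices hp)
    have hdb : d ≠ b := by
      rintro rfl
      exact hxA (ℓ.mem_ownLabels.2 ⟨q, hp, rfl⟩)
    obtain rfl : d = c := by cases b <;> cases c <;> cases d <;> simp_all
    have hq₀ : q ≠ [] := by
      rintro rfl
      exact hdb (singleton_mem_vertices_iff.1 hp).1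
    exact ⟨q, (cons_mem_vertices_iff hq₀).1 hp, rfl⟩

def restrict (c : Bool) : (B.child c).Labelling (childLabels S ℓ.ownLabels c) where
  lab b q := if q ∈ (B.child c).vertices b then ℓ.lab b (c :: q) else 0
  lab_eq_zero _ _ hq := if_neg hq
  bijOn b := by
    refine Set.BijOn.mk (fun q hq => ?_) (fun q hq q' hq' he => ?_) (fun x hx => ?_)
    · rw [if_pos (mem_coe.1 hq)]
      exact ℓ.lab_cons_mem_childLabels hq
    · simp only [if_pos (mem_coe.1 hq), if_pos (mem_coe.1 hq')] at he
      exact (List.cons_eq_cons.1 ((ℓ.bijOn b).injOn (cons_mem_vertices hq)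
        (cons_mem_vertices hq') he)).2
    · obtain ⟨q, hq, rfl⟩ := ℓ.surjOn_childLabels hx
      exact ⟨q, hq, if_pos hq⟩
  lab_lt_of_prefix b u hu v hv huv hne := by
    simp only [if_pos hu, if_pos hv]
    exact ℓ.lab_lt_of_prefix b _ (cons_mem_vertices hu) _ (cons_mem_vertices hv)
      (List.cons_prefix_cons.2 ⟨rfl, huv⟩) (by simpa using hne)

end Labelling

lemma child_node_apply (L : Bool → BT) (c : Bool) : (node (L false) (L true)).child c = L c := by
  cases c <;> rfl

lemma cons_mem_vertices_node_iff {L : Bool → BT} {b d : Bool} {q : List Bool} :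
    d :: q ∈ (node (L false) (L true)).vertices b ↔
      (q = [] ∧ d = b ∧ L d ≠ nil) ∨ q ∈ (L d).vertices b := by
  rcases eq_or_ne q [] with rfl | hq
  · simp [singleton_mem_vertices_iff, child_node_apply, nil_notMem_vertices]
  · simp [cons_mem_vertices_iff hq, child_node_apply, hq]

def joinLab (A : Bool → Finset ℕ) (m : Bool → Bool → List Bool → ℕ) (b : Bool) :
    List Bool → ℕ
  | [] => 0
  | d :: q => if q = [] ∧ d = b then (A b).sup id else m d b q

section Join

variable {S A : Bool → Finset ℕ} {L : Bool → BT}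
  (m : ∀ c, (L c).Labelling (childLabels S A c))

lemma joinLab_singleton (b : Bool) : joinLab A (fun c => (m c).lab) b [b] = (A b).sup id := by
  simp [joinLab]

lemma joinLab_cons {b d : Bool} {q : List Bool} (hq : q ∈ (L d).vertices b) :
    joinLab A (fun c => (m c).lab) b (d :: q) = (m d).lab b q := by
  simp [joinLab, ne_nil_of_mem_vertices hq]

variable {m} in
lemma joinLab_lt_of_prefix {b : Bool} {u v : List Bool}
    (hu : u ∈ (node (L false) (L true)).vertices b)
    (hv : v ∈ (node (L false) (L true)).vertices b)
    (huv : u <+: v) (hne : u ≠ v) :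
    joinLab A (fun c => (m c).lab) b v < joinLab A (fun c => (m c).lab) b u := by
  obtain ⟨d, q, rfl⟩ := List.exists_cons_of_ne_nil (ne_nil_of_mem_vertices hu)
  obtain ⟨d', q', rfl⟩ := List.exists_cons_of_ne_nil (ne_nil_of_mem_vertices hv)
  obtain ⟨rfl, hqq'⟩ := List.cons_prefix_cons.1 huv
  have hq' : q' ∈ (L d).vertices b := by
    refine (cons_mem_vertices_node_iff.1 hv).resolve_left fun ⟨hq'₀, _⟩ => hne ?_
    subst hq'₀
    rw [List.prefix_nil.1 hqq']
  rw [joinLab_cons m hq']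
  rcases cons_mem_vertices_node_iff.1 hu with ⟨rfl, rfl, -⟩ | hq
  · rw [joinLab_singleton]
    have := (m d).lab_mem hq'
    rw [childLabels, if_pos rfl] at this
    exact lt_sup_of_mem_eraseMax this
  · rw [joinLab_cons m hq]
    exact (m d).lab_lt_of_prefix b q hq q' hq' hqq' (by simpa using hne)

variable (hA : ∀ b, A b ⊆ S b) (hL : ∀ c, L c = nil ↔ A c = ∅)
include hL

lemma nonempty_iff_ne_nil (c : Bool) : (A c).Nonempty ↔ L c ≠ nil := by
  rw [nonempty_iff_ne_empty, ne_eq, ne_eq, hL]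

lemma joinLab_eq_zero (b : Bool) (p : List Bool)
    (hp : p ∉ (node (L false) (L true)).vertices b) : joinLab A (fun c => (m c).lab) b p = 0 := by
  rcases p with _ | ⟨d, q⟩
  · rfl
  rw [cons_mem_vertices_node_iff, not_or] at hp
  by_cases hqd : q = [] ∧ d = b
  · obtain ⟨rfl, rfl⟩ := hqd
    have hA₀ : A d = ∅ := (hL d).1 (by simpa using hp.1)
    simp [joinLab, hA₀]
  · simp only [joinLab, if_neg hqd]
    exact (m d).lab_eq_zero b q hp.2

-- The root's `b`-child, the `b`-children below it and those below the other child of the root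
-- take their labels in the disjoint sets `{max (A b)}`, `eraseMax (A b)` and `S b \ A b`.
include hA in
lemma joinLab_bijOn (b : Bool) : Set.BijOn (joinLab A (fun c => (m c).lab) b)
    ((node (L false) (L true)).vertices b) (S b) := by
  have hmem : ∀ {d q}, q ∈ (L d).vertices b →
      joinLab A (fun c => (m c).lab) b (d :: q) ∈ childLabels S A d b := fun hq => by
    rw [joinLab_cons m hq]
    exact (m _).lab_mem hq
  refine Set.BijOn.mk (fun p hp => ?_) (fun p hp p' hp' he => ?_) (fun x hx => ?_)
  · obtain ⟨d, q, rfl⟩ := List.exists_cons_of_ne_nil (ne_nil_of_mem_vertices hp)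
    rcases cons_mem_vertices_node_iff.1 hp with ⟨rfl, rfl, hLd⟩ | hq
    · rw [joinLab_singleton]
      exact hA d (sup_id_mem ((nonempty_iff_ne_nil hL d).2 hLd))
    · exact childLabels_subset hA d b (hmem hq)
  · obtain ⟨d, q, rfl⟩ := List.exists_cons_of_ne_nil (ne_nil_of_mem_vertices hp)
    obtain ⟨d', q', rfl⟩ := List.exists_cons_of_ne_nil (ne_nil_of_mem_vertices hp')
    rcases cons_mem_vertices_node_iff.1 hp with ⟨rfl, rfl, hLd⟩ | hq <;>
      rcases cons_mem_vertices_node_iff.1 hp' with ⟨rfl, rfl, hLd'⟩ | hq'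
    · rfl
    · rw [joinLab_singleton] at he
      exact absurd (he ▸ hmem hq') (sup_notMem_childLabels ((nonempty_iff_ne_nil hL d).2 hLd) _)
    · rw [joinLab_singleton] at he
      exact absurd (he ▸ hmem hq) (sup_notMem_childLabels ((nonempty_iff_ne_nil hL d').2 hLd') _)
    · by_cases hdd' : d = d'
      · subst hdd'
        rw [joinLab_cons m hq, joinLab_cons m hq'] at he
        rw [(m d).bijOn b |>.injOn hq hq' he]
      · exact absurd he ((disjoint_childLabels S A hdd' b).forall_ne_finset (hmem hq) (hmem hq'))
  · by_cases hroot : x ∈ A b ∧ x = (A b).sup id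
    · refine ⟨[b], ?_, by rw [joinLab_singleton, hroot.2]⟩
      exact cons_mem_vertices_node_iff.2
        (Or.inl ⟨rfl, rfl, (nonempty_iff_ne_nil hL b).1 ⟨x, hroot.1⟩⟩)
    · obtain ⟨c, hc⟩ := exists_mem_childLabels hx fun hxA hxs => hroot ⟨hxA, hxs⟩
      obtain ⟨q, hq, rfl⟩ := ((m c).bijOn b).surjOn hc
      exact ⟨c :: q, cons_mem_vertices_node_iff.2 (Or.inr hq), joinLab_cons m hq⟩

include hA in
def join : (node (L false) (L true)).Labelling S where
  lab := joinLab A (fun c => (m c).lab)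
  lab_eq_zero := joinLab_eq_zero m hL
  bijOn := joinLab_bijOn m hA hL
  lab_lt_of_prefix _ _ hu _ hv := joinLab_lt_of_prefix hu hv

lemma ownLabels_join : (join m hA hL).ownLabels = A := by
  funext b
  ext x
  rw [Labelling.mem_ownLabels]
  constructor
  · rintro ⟨q, hq, rfl⟩
    change joinLab A (fun c => (m c).lab) b (b :: q) ∈ A b
    rcases cons_mem_vertices_node_iff.1 hq with ⟨rfl, -, hLb⟩ | hq
    · rw [joinLab_singleton]
      exact sup_id_mem ((nonempty_iff_ne_nil hL b).2 hLb)
    · have := (m b).lab_mem hq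
      rw [childLabels, if_pos rfl] at this
      rw [joinLab_cons m hq]
      exact eraseMax_subset _ this
  · intro hx
    by_cases hxs : x = (A b).sup id
    · exact ⟨[], cons_mem_vertices_node_iff.2 (Or.inl ⟨rfl, rfl,
        (nonempty_iff_ne_nil hL b).1 ⟨x, hx⟩⟩), hxs ▸ joinLab_singleton m b⟩
    · have hc : x ∈ childLabels S A b b := by
        rw [childLabels, if_pos rfl]
        exact mem_erase.2 ⟨hxs, hx⟩
      obtain ⟨q, hq, rfl⟩ := ((m b).bijOn b).surjOn hc
      exact ⟨q, cons_mem_vertices_node_iff.2 (Or.inr hq), joinLab_cons m hq⟩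

lemma restrict_join_lab (c : Bool) : ((join m hA hL).restrict c).lab = (m c).lab := by
  funext b q
  simp only [Labelling.restrict, child_node_apply]
  split_ifs with hq
  · exact joinLab_cons m hq
  · exact ((m c).lab_eq_zero b q hq).symm

end Join

lemma Labelling.joinLab_restrict {B : BT} {S : Bool → Finset ℕ} (ℓ : B.Labelling S) :
    joinLab ℓ.ownLabels (fun c => (ℓ.restrict c).lab) = ℓ.lab := by
  funext b p
  rcases p with _ | ⟨d, q⟩
  · exact (ℓ.lab_eq_zero b [] (nil_notMem_vertices B b)).symm
  simp only [joinLab]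
  split_ifs with hqd
  · obtain ⟨rfl, rfl⟩ := hqd
    by_cases hv : [d] ∈ B.vertices d
    · exact (ℓ.lab_singleton hv).symm
    · have hnil : B.child d = nil := by simpa [singleton_mem_vertices_iff] using hv
      rw [(ℓ.child_eq_nil_iff d).1 hnil, ℓ.lab_eq_zero d [d] hv, sup_empty, bot_eq_zero]
  · simp only [restrict]
    split_ifs with hq
    · rfl
    · refine (ℓ.lab_eq_zero b _ fun hv => hq ?_).symm
      rcases eq_or_ne q [] with rfl | hq₀
      · exact absurd ⟨rfl, (singleton_mem_vertices_iff.1 hv).1⟩ hqd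
      · exact (cons_mem_vertices_iff hq₀).1 hv

abbrev OwnLabelsFiber (S A : Bool → Finset ℕ) :=
  {x : LabelledTree S // x.1 ≠ nil ∧ x.2.ownLabels = A}

abbrev Branch (S A : Bool → Finset ℕ) (c : Bool) :=
  {y : LabelledTree (childLabels S A c) // y.1 = nil ↔ A c = ∅}

def splitEquiv {S A : Bool → Finset ℕ} (hA : ∀ b, A b ⊆ S b) :
    OwnLabelsFiber S A ≃ ∀ c, Branch S A c where
  toFun x c :=
    ⟨⟨x.1.1.child c, (x.1.2.restrict c).copy (congrArg (childLabels S · c) x.2.2)⟩,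
    (x.1.2.child_eq_nil_iff c).trans (by rw [x.2.2])⟩
  invFun y := ⟨⟨_, join (fun c => (y c).1.2) hA (fun c => (y c).2)⟩, nofun,
    ownLabels_join (fun c => (y c).1.2) hA (fun c => (y c).2)⟩
  left_inv := by
    rintro ⟨⟨B, ℓ⟩, hB, rfl⟩
    exact Subtype.ext (LabelledTree.ext (eq_node_child hB).symm ℓ.joinLab_restrict)
  right_inv y := by
    funext c
    exact Subtype.ext (LabelledTree.ext (child_node_apply (fun c => (y c).1.1) c)
      (restrict_join_lab (fun c => (y c).1.2) hA (fun c => (y c).2) c))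

def neNilEquivSigma (S : Bool → Finset ℕ) :
    {x : LabelledTree S // x.1 ≠ nil} ≃
      Σ A : ((S false).powerset ×ˢ (S true).powerset : Finset _),
        OwnLabelsFiber S (fun b => cond b A.1.2 A.1.1) :=
  (Equiv.sigmaFiberEquiv fun x : {x : LabelledTree S // x.1 ≠ nil} =>
      (⟨(x.1.2.ownLabels false, x.1.2.ownLabels true), mem_product.2
        ⟨mem_powerset.2 (x.1.2.ownLabels_subset _),
          mem_powerset.2 (x.1.2.ownLabels_subset _)⟩⟩ :
        ((S false).powerset ×ˢ (S true).powerset : Finset _))).symm.trans <|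
    Equiv.sigmaCongrRight fun A =>
      { toFun := fun x => ⟨x.1.1, x.1.2, funext fun b => by
          obtain ⟨h₀, h₁⟩ := Prod.ext_iff.1 (congrArg Subtype.val x.2)
          cases b
          exacts [h₀, h₁]⟩
        invFun := fun y => ⟨⟨y.1, y.2.1⟩, Subtype.ext (by simp [y.2.2])⟩
        left_inv := fun _ => rfl
        right_inv := fun _ => rfl }

lemma cond_subset {S : Bool → Finset ℕ} {A : Finset ℕ × Finset ℕ}
    (hA : A ∈ (S false).powerset ×ˢ (S true).powerset) (b : Bool) : cond b A.2 A.1 ⊆ S b := by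
  obtain ⟨h₀, h₁⟩ := mem_product.1 hA
  cases b
  exacts [mem_powerset.1 h₀, mem_powerset.1 h₁]

lemma sum_card_childLabels_lt {S A : Bool → Finset ℕ} (hA : ∀ b, A b ⊆ S b) {c : Bool}
    (hc : A c ≠ ∅) : ∑ b, #(childLabels S A c b) < ∑ b, #(S b) := by
  have hpos := card_pos.2 (nonempty_iff_ne_empty.2 hc)
  have hle := card_le_card (hA c)
  have hsd := card_le_card (sdiff_subset (s := S (!c)) (t := A (!c)))
  have hem := card_eraseMax (nonempty_iff_ne_empty.2 hc)
  cases c <;> simp only [Fintype.sum_bool, childLabels, Bool.not_true, Bool.not_false] at * <;>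
    simp only [Bool.false_eq_true, Bool.true_eq_false, if_true, if_false] <;> omega

instance finite_labelledTree (S : Bool → Finset ℕ) : Finite (LabelledTree S) := by
  induction hn : ∑ b, #(S b) using Nat.strong_induction_on generalizing S with
  | _ n ih =>
  have hBranch (A : Bool → Finset ℕ) (hA : ∀ b, A b ⊆ S b) (c : Bool) :
      Finite (Branch S A c) := by
    by_cases hc : A c = ∅
    · exact Finite.of_injective (fun y : Branch S A c => (⟨y.1, y.2.2 hc⟩ : {x // x.1 = nil}))
        fun y y' h => Subtype.ext (by simpa using congrArg Subtype.val h)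
    · have := ih _ (hn ▸ sum_card_childLabels_lt hA hc) _ rfl
      exact Subtype.finite
  have hFiber (A : ((S false).powerset ×ˢ (S true).powerset : Finset _)) :
      Finite (OwnLabelsFiber S (fun b => cond b A.1.2 A.1.1)) := by
    have := hBranch _ (cond_subset A.2)
    exact Finite.of_equiv _ (splitEquiv (cond_subset A.2)).symm
  have : Finite {x : LabelledTree S // x.1 ≠ nil} := Finite.of_equiv _ (neNilEquivSigma S).symm
  exact Finite.of_equiv _ (Equiv.sumCompl fun x : LabelledTree S => x.1 = nil)

lemma card_branch_eq_mixedSum {S A : Bool → Finset ℕ} (hA : ∀ b, A b ⊆ S b)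
    (ih : ∀ S' : Bool → Finset ℕ, ∑ b, #(S' b) < ∑ b, #(S b) →
      Nat.card {x : LabelledTree S' // x.1 ≠ nil} = stirlingSum #(S' false) #(S' true))
    (c : Bool) : Nat.card (Branch S A c) = mixedSum #(A c) #(S (!c) \ A (!c)) := by
  by_cases hc : A c = ∅
  · have hnil : (∀ b, childLabels S A c b = ∅) ↔ #(S (!c) \ A (!c)) = 0 := by
      cases c <;> simp [Bool.forall_bool, childLabels, hc, eraseMax]
    rw [Nat.card_congr (Equiv.subtypeEquivRight (q := fun y => y.1 = nil) fun y => by simp [hc]),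
      card_labelledTree_nil, hc, card_empty, mixedSum_zero_left]
    exact if_congr hnil rfl rfl
  · obtain ⟨k, hk⟩ : ∃ k, #(A c) = k + 1 :=
      Nat.exists_eq_add_one.2 (card_pos.2 (nonempty_iff_ne_empty.2 hc))
    have hem : #(eraseMax (A c)) = k := by rw [card_eraseMax (nonempty_iff_ne_empty.2 hc), hk]; rfl
    rw [Nat.card_congr (Equiv.subtypeEquivRight (q := fun y => y.1 ≠ nil) fun y => by simp [hc]),
      ih _ (sum_card_childLabels_lt hA hc), hk, mixedSum_succ_left]
    cases c
    · simp [childLabels, hem]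
    · simp [childLabels, hem, stirlingSum_comm]

theorem card_labelledTree_ne_nil (S : Bool → Finset ℕ) :
    Nat.card {x : LabelledTree S // x.1 ≠ nil} = stirlingSum #(S false) #(S true) := by
  induction hn : ∑ b, #(S b) using Nat.strong_induction_on generalizing S with
  | _ n ih =>
  have ih' S' (h : ∑ b, #(S' b) < ∑ b, #(S b)) := ih _ (hn ▸ h) S' rfl
  rw [Nat.card_congr (neNilEquivSigma S), Nat.card_sigma,
    sum_coe_sort ((S false).powerset ×ˢ (S true).powerset)
      (fun A : Finset ℕ × Finset ℕ => Nat.card (OwnLabelsFiber S fun b => cond b A.2 A.1)),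
    sum_product]
  calc _ = ∑ A₀ ∈ (S false).powerset, ∑ A₁ ∈ (S true).powerset,
        mixedSum #A₀ (#(S true) - #A₁) * mixedSum #A₁ (#(S false) - #A₀) := by
        refine sum_congr rfl fun A₀ h₀ => sum_congr rfl fun A₁ h₁ => ?_
        have hA := cond_subset (A := (A₀, A₁)) (mem_product.2 ⟨h₀, h₁⟩)
        rw [Nat.card_congr (splitEquiv hA), Nat.card_pi, Fintype.prod_bool,
          card_branch_eq_mixedSum hA ih', card_branch_eq_mixedSum hA ih']
        simp [card_sdiff_of_subset (mem_powerset.1 h₀),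
          card_sdiff_of_subset (mem_powerset.1 h₁), mul_comm]
    _ = _ := by
        rw [stirlingSum_eq_sum_choose_mul_mixedSum, sum_powerset_apply_card fun a =>
          ∑ A₁ ∈ (S true).powerset,
            mixedSum a (#(S true) - #A₁) * mixedSum #A₁ (#(S false) - a)]
        refine sum_congr rfl fun a _ => ?_
        rw [sum_powerset_apply_card fun b =>
          mixedSum a (#(S true) - b) * mixedSum b (#(S false) - a), smul_eq_mul, mul_sum]
        exact sum_congr rfl fun b _ => by rw [smul_eq_mul]; ring

end BT

namespace NAT

variable {B : BT}

lemma ext {t t' : NAT B} (hL : t.fL = t'.fL) (hR : t.fR = t'.fR) : t = t' := by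
  cases t
  cases t'
  cases hL
  cases hR
  rfl

def lab (t : NAT B) : Bool → List Bool → ℕ
  | false, p => if h : p ∈ B.leftVertices then t.fL ⟨p, h⟩ else 0
  | true, p => if h : p ∈ B.rightVertices then t.fR ⟨p, h⟩ else 0

def equivLabelling : NAT B ≃ B.Labelling (fun b => range #(B.vertices b)) where
  toFun t :=
    { lab := t.lab
      lab_eq_zero := fun b p hp => by cases b <;> exact dif_neg hp
      bijOn := fun b => by
        cases b
        exacts [bijOn_dite_val t.bijL, bijOn_dite_val t.bijR]
      lab_lt_of_prefix := fun b u hu v hv huv hne => by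
        cases b
        · simp only [lab, dif_pos (c := u ∈ B.leftVertices) hu,
            dif_pos (c := v ∈ B.leftVertices) hv]
          exact t.ancL ⟨u, hu⟩ ⟨v, hv⟩ huv fun h => hne (congrArg Subtype.val h)
        · simp only [lab, dif_pos (c := u ∈ B.rightVertices) hu,
            dif_pos (c := v ∈ B.rightVertices) hv]
          exact t.ancR ⟨u, hu⟩ ⟨v, hv⟩ huv fun h => hne (congrArg Subtype.val h) }
  invFun ℓ :=
    { fL := fun p => ⟨ℓ.lab false p, mem_range.1 (ℓ.lab_mem p.2)⟩
      fR := fun p => ⟨ℓ.lab true p, mem_range.1 (ℓ.lab_mem p.2)⟩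
      bijL := bijective_finCodRestrict (ℓ.bijOn false)
      bijR := bijective_finCodRestrict (ℓ.bijOn true)
      ancL := fun u v huv hne =>
        ℓ.lab_lt_of_prefix false u u.2 v v.2 huv (Subtype.coe_ne_coe.2 hne)
      ancR := fun u v huv hne =>
        ℓ.lab_lt_of_prefix true u u.2 v v.2 huv (Subtype.coe_ne_coe.2 hne) }
  left_inv t :=
    ext (funext fun p => Fin.ext (by simp [lab])) (funext fun p => Fin.ext (by simp [lab]))
  right_inv ℓ := by
    ext b p
    cases b <;> simp only [lab] <;> split_ifs with hp
    exacts [rfl, (ℓ.lab_eq_zero _ p hp).symm, rfl, (ℓ.lab_eq_zero _ p hp).symm]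

end NAT

lemma BT.range_card_vertices_eq {B : BT} {w h : ℕ} (hw : #B.leftVertices = w)
    (hh : #B.rightVertices = h) :
    (fun b => range #(B.vertices b)) = fun b => range (cond b h w) := by
  funext b
  cases b
  exacts [congrArg range hw, congrArg range hh]

lemma BT.Labelling.card_leftVertices {B : BT} {w h : ℕ}
    (ℓ : B.Labelling fun b => range (cond b h w)) : #B.leftVertices = w :=
  (ℓ.card_vertices false).trans (card_range w)

lemma BT.Labelling.card_rightVertices {B : BT} {w h : ℕ}
    (ℓ : B.Labelling fun b => range (cond b h w)) : #B.rightVertices = h :=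
  (ℓ.card_vertices true).trans (card_range h)

def natEquivLabelledTree (w h : ℕ) :
    {T : Σ B : BT, NAT B //
        T.1 ≠ BT.nil ∧ T.1.leftVertices.card = w ∧ T.1.rightVertices.card = h} ≃
      {x : BT.LabelledTree (fun b => range (cond b h w)) // x.1 ≠ BT.nil} where
  toFun T :=
    ⟨⟨T.1.1, (NAT.equivLabelling T.1.2).copy (BT.range_card_vertices_eq T.2.2.1 T.2.2.2)⟩,
      T.2.1⟩
  invFun x := ⟨⟨x.1.1, NAT.equivLabelling.symm (x.1.2.copy
    (BT.range_card_vertices_eq x.1.2.card_leftVertices x.1.2.card_rightVertices).symm)⟩,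
    x.2, x.1.2.card_leftVertices, x.1.2.card_rightVertices⟩
  left_inv T := Subtype.ext (congrArg (Sigma.mk _) (NAT.equivLabelling.symm_apply_apply T.1.2))
  right_inv x := Subtype.ext <| BT.LabelledTree.ext rfl (congrArg BT.Labelling.lab <|
    NAT.equivLabelling.apply_symm_apply <| x.1.2.copy
      (BT.range_card_vertices_eq x.1.2.card_leftVertices x.1.2.card_rightVertices).symm :)

/-- The number of non-ambiguous trees with `w` left children and `h` right
children is `Σ_{p≥1} (p−1)! · p! · S(w+1,p) · S(h+1,p)` (the summands vanish for `p > w+1`). -/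
theorem natCount_eq_sum_stirling (w h : ℕ) :
    Nat.card {T : Σ B : BT, NAT B //
        T.1 ≠ BT.nil ∧ T.1.leftVertices.card = w ∧ T.1.rightVertices.card = h} =
      ∑ p ∈ Finset.Icc 1 (w + 1),
        (p - 1).factorial * p.factorial * stirling2 (w + 1) p * stirling2 (h + 1) p := by
  rw [Nat.card_congr (natEquivLabelledTree w h), BT.card_labelledTree_ne_nil,
    sum_Icc_stirling2_eq_stirlingSum]
  simp
end

section
/- Fix integers d ≥ k ≥ 1. For every (d,k)-NAT of shape a (d,k)-ary tree M and every i ∈ {1,…,d}, the i-th coordinate w_i of the root label satisfies w_i = 1 + Σ_{π a (d,k)-direction with i ∈ π} |D_π(M)|. In particular the root label depends only on the shape M. -/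
/-- A `(d,k)`-direction: a `k`-element subset of the `d` coordinates. -/
abbrev Dir (d k : ℕ) := {π : Finset (Fin d) // π.card = k}

/-- A `(d,k)`-ary tree: every vertex has at most one child for each `(d,k)`-direction. -/
inductive KTree (d k : ℕ) : Type where
  | node : (Dir d k → Option (KTree d k)) → KTree d k

namespace KTree

variable {d k : ℕ}

/-- The subtree of a `(d,k)`-ary tree at a given position (path of directions),
if the position exists in the tree. -/
def subtreeAt : KTree d k → List (Dir d k) → Option (KTree d k)
  | t, [] => some t
  | .node c, π :: p =>
    match c π with
    | some t => subtreeAt t p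
    | none => none

/-- `p` is (the position of) a vertex of `M`. -/
def isVertex (M : KTree d k) (p : List (Dir d k)) : Prop := (M.subtreeAt p).isSome

end KTree

/-- The direction of the vertex at position `p`: the direction indexing it as a child of its
parent; the root (empty position) has direction `{1,…,d}`. -/
def dirOf {d k : ℕ} (p : List (Dir d k)) : Finset (Fin d) :=
  (p.getLast?).elim Finset.univ Subtype.val

/-- A non-ambiguous tree of dimension `(d,k)` of shape `M`: each vertex of direction `π`
carries a tuple of positive integers indexed by `π` (the root carrying a full `d`-tuple),
encoded as a function `lbl` which vanishes at the unused positions; entries strictly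
decrease from ancestors to descendants, and for each coordinate `i` the `i`-th entries are
pairwise distinct and form an integer interval with minimum `1`. -/
structure KNAT (d k : ℕ) (M : KTree d k) where
  lbl : List (Dir d k) → Fin d → ℕ
  supp : ∀ p i, ¬(M.isVertex p ∧ i ∈ dirOf p) → lbl p i = 0
  anc : ∀ p q, M.isVertex p → M.isVertex q → p <+: q → p ≠ q →
    ∀ i, i ∈ dirOf p → i ∈ dirOf q → lbl q i < lbl p i
  inj : ∀ i : Fin d, Set.InjOn (fun p => lbl p i) {p | M.isVertex p ∧ i ∈ dirOf p}
  interval : ∀ i : Fin d,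
    (fun p => lbl p i) '' {p | M.isVertex p ∧ i ∈ dirOf p} =
      Set.Icc 1 (Set.ncard {p | M.isVertex p ∧ i ∈ dirOf p})

/-!
The root is an ancestor of every vertex, so its `i`-th entry is the largest one; since the
`i`-th entries fill `[1, n]`, with `n` the number of vertices whose direction contains `i`,
the root carries `n`. Sorting these vertices by direction (the root, then the non-root
vertices of each direction `π ∋ i`) gives the formula.
-/

theorem dirOf_eq_of_getLast?_eq_some {d k : ℕ} {p : List (Dir d k)} {π : Dir d k}
    (h : p.getLast? = some π) : dirOf p = π.1 := by
  simp [dirOf, h]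

namespace KTree

variable {d k : ℕ}

@[simp] theorem isVertex_nil (M : KTree d k) : M.isVertex [] := rfl

theorem isVertex_cons {c : Dir d k → Option (KTree d k)} {π : Dir d k} {p : List (Dir d k)} :
    (node c).isVertex (π :: p) ↔ ∃ t, c π = some t ∧ t.isVertex p := by
  simp only [isVertex, subtreeAt]
  split <;> simp_all

theorem finite_setOf_isVertex (M : KTree d k) : {p | M.isVertex p}.Finite := by
  -- `KTree` is nested through `Option`, so induction goes through the recursor directly.
  refine KTree.rec (motive_1 := fun M => {p | M.isVertex p}.Finite)
    (motive_2 := fun o => ∀ t, o = some t → {p | t.isVertex p}.Finite)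
    (fun c ih => ?_) (by simp) (fun t ht _ h => Option.some_injective _ h ▸ ht) M
  have hsub : {p | (node c).isVertex p} ⊆
      insert [] (⋃ π, (π :: ·) '' {p | (node c).isVertex (π :: p)}) := by
    rintro (_ | ⟨π, p⟩) hp
    · exact Set.mem_insert _ _
    · exact Set.mem_insert_of_mem _ (Set.mem_iUnion.2 ⟨π, p, hp, rfl⟩)
  refine (Set.Finite.insert _ (Set.finite_iUnion fun π => Set.Finite.image _ ?_)).subset hsub
  cases h : c π with
  | none => simp [isVertex_cons, h]
  | some t => simpa [isVertex_cons, h] using ih π t h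

theorem ncard_setOf_mem_dirOf (M : KTree d k) (i : Fin d) :
    {p | M.isVertex p ∧ i ∈ dirOf p}.ncard =
      1 + ∑ π : Dir d k,
        if i ∈ π.1 then {p | M.isVertex p ∧ p.getLast? = some π}.ncard else 0 := by
  set S := {p | M.isVertex p ∧ i ∈ dirOf p}
  have hfibres : S = ⋃ o : Option (Dir d k), {p ∈ S | p.getLast? = o} := by
    ext p; simp
  have hfinite (o : Option (Dir d k)) : {p ∈ S | p.getLast? = o}.Finite :=
    M.finite_setOf_isVertex.subset fun p hp => hp.1.1
  have hdisjoint : Pairwise fun o o' : Option (Dir d k) =>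
      Disjoint {p ∈ S | p.getLast? = o} {p ∈ S | p.getLast? = o'} :=
    fun _ _ hne => Set.disjoint_left.2 fun _ h₁ h₂ => hne (h₁.2.symm.trans h₂.2)
  rw [hfibres, Set.ncard_iUnion_of_finite hfinite hdisjoint, finsum_eq_sum_of_fintype,
    Fintype.sum_option]
  congr 1
  · have hroot : {p ∈ S | p.getLast? = none} = {[]} := by
      ext p
      simp only [S, Set.mem_ofPred_eq, Set.mem_singleton_iff, List.getLast?_eq_none_iff]
      exact ⟨And.right, fun h => ⟨⟨h ▸ M.isVertex_nil, h ▸ Finset.mem_univ i⟩, h⟩⟩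
    rw [hroot, Set.ncard_singleton]
  · refine Finset.sum_congr rfl fun π _ => ?_
    split_ifs with hi
    · congr 1; ext p; simp +contextual [S, dirOf_eq_of_getLast?_eq_some, hi]
    · convert Set.ncard_empty (List (Dir d k))
      refine Set.eq_empty_of_forall_notMem fun p ⟨⟨_, hip⟩, hlast⟩ => hi ?_
      rwa [dirOf_eq_of_getLast?_eq_some hlast] at hip

end KTree

namespace KNAT

variable {d k : ℕ} {M : KTree d k}

theorem lbl_nil_eq_ncard (N : KNAT d k M) (i : Fin d) :
    N.lbl [] i = {p | M.isVertex p ∧ i ∈ dirOf p}.ncard := by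
  have hroot : [] ∈ {p | M.isVertex p ∧ i ∈ dirOf p} := ⟨M.isVertex_nil, Finset.mem_univ i⟩
  have hle : N.lbl [] i ∈ Set.Icc 1 {p | M.isVertex p ∧ i ∈ dirOf p}.ncard :=
    N.interval i ▸ ⟨[], hroot, rfl⟩
  obtain ⟨p, hp, hpmax⟩ : {p | M.isVertex p ∧ i ∈ dirOf p}.ncard ∈
      (fun p => N.lbl p i) '' {p | M.isVertex p ∧ i ∈ dirOf p} :=
    N.interval i ▸ ⟨hle.1.trans hle.2, le_rfl⟩
  rcases eq_or_ne p [] with rfl | hne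
  · exact hpmax
  · have := N.anc [] p hroot.1 hp.1 List.nil_prefix hne.symm i hroot.2 hp.2
    exact absurd (hpmax ▸ this) (not_lt.2 hle.2)

end KNAT

theorem knat_root_label_general (d k : ℕ)
    (M : KTree d k) (N : KNAT d k M) (i : Fin d) :
    N.lbl [] i =
      1 + ∑ π : Dir d k,
        if i ∈ π.1 then
          Set.ncard {p : List (Dir d k) | M.isVertex p ∧ p.getLast? = some π}
        else 0 :=
  (N.lbl_nil_eq_ncard i).trans (M.ncard_setOf_mem_dirOf i)

/-- For every `(d,k)`-NAT `N` of shape `M` and every coordinate `i`, the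
`i`-th entry of the root label is `1 + Σ_{π ∋ i} |D_π(M)|`, where `D_π(M)` is the set of
non-root vertices of `M` of direction `π`. In particular it only depends on the shape `M`. -/
theorem knat_root_label (d k : ℕ) (hk : 1 ≤ k) (hkd : k ≤ d)
    (M : KTree d k) (N : KNAT d k M) (i : Fin d) :
    N.lbl [] i =
      1 + ∑ π : Dir d k,
        if i ∈ π.1 then
          Set.ncard {p : List (Dir d k) | M.isVertex p ∧ p.getLast? = some π}
        else 0 :=
  knat_root_label_general d k M N i
end

section
/- Let d ≥ 2 be an integer and let s : ℝ^d → ℝ be a C^∞ function satisfying ∂_1∂_2⋯∂_d s = ∏_{i=1}^d ∂_i s everywhere on ℝ^d (where ∂_i is the partial derivative in the i-th variable). Then for all C^∞ functions s_1,…,s_d : ℝ → ℝ, the function u(x_1,…,x_d) := s(s_1(x_1),…,s_d(x_d)) also satisfies ∂_1∂_2⋯∂_d u = ∏_{i=1}^d ∂_i u everywhere on ℝ^d. -/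
/-- The partial derivative of `f : ℝ^d → ℝ` in the `i`-th coordinate direction. -/
noncomputable def pder {d : ℕ} (i : Fin d) (f : (Fin d → ℝ) → ℝ) : (Fin d → ℝ) → ℝ :=
  fun x => fderiv ℝ f x (Pi.single i 1)

/-- The mixed partial derivative `∂_1 ∂_2 ⋯ ∂_d f`, taken once in each coordinate. -/
noncomputable def mixedDer {d : ℕ} (f : (Fin d → ℝ) → ℝ) : (Fin d → ℝ) → ℝ :=
  (List.finRange d).foldr pder f

/-!
By the chain rule, `∂_i u = (∂_i s ∘ S) · s_i'(x_i)` where `S x = (s_1(x_1), …, s_d(x_d))`.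
The factor `s_i'(x_i)` depends on `x_i` alone, so it is a constant for every later partial
derivative `∂_j`, `j ≠ i`. Differentiating once in each coordinate therefore gives
`∂_1⋯∂_d u = (∂_1⋯∂_d s ∘ S) · ∏_i s_i'(x_i)`, and the equation for `s` at the point `S x`
turns this into `∏_i (∂_i s ∘ S) · s_i'(x_i) = ∏_i ∂_i u`.
-/

open scoped ContDiff
open Function

section

variable {d : ℕ}

theorem pder_eq_deriv_update {f : (Fin d → ℝ) → ℝ} {x : Fin d → ℝ}
    (hf : DifferentiableAt ℝ f x) (i : Fin d) :
    pder i f x = deriv (fun t => f (update x i t)) (x i) := by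
  rw [← update_eq_self i x] at hf
  have h := hf.hasFDerivAt.comp_hasDerivAt (x i) (hasDerivAt_update x i (x i))
  rw [update_eq_self] at h
  exact h.deriv.symm

theorem pder_eq_zero_of_forall_update_eq {f : (Fin d → ℝ) → ℝ} {x : Fin d → ℝ} (i : Fin d)
    (hf : ∀ t, f (update x i t) = f x) : pder i f x = 0 := by
  by_cases hdiff : DifferentiableAt ℝ f x
  · simp [pder_eq_deriv_update hdiff, hf]
  · simp [pder, fderiv_zero_of_not_differentiableAt hdiff]

theorem pder_mul {f h : (Fin d → ℝ) → ℝ} {x : Fin d → ℝ} (hf : DifferentiableAt ℝ f x)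
    (hh : DifferentiableAt ℝ h x) (i : Fin d) :
    pder i (fun y => f y * h y) x = pder i f x * h x + f x * pder i h x := by
  simp only [pder, fderiv_fun_mul hf hh, add_apply, smul_apply, smul_eq_mul]
  ring

theorem pder_comp_coordwise {H : (Fin d → ℝ) → ℝ} {g : Fin d → ℝ → ℝ} {y : Fin d → ℝ}
    (hH : DifferentiableAt ℝ H (fun j => g j (y j)))
    (hg : ∀ j, DifferentiableAt ℝ (g j) (y j)) (i : Fin d) :
    pder i (fun x => H (fun j => g j (x j))) y =
      pder i H (fun j => g j (y j)) * deriv (g i) (y i) := by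
  set G := fun j => g j (y j)
  have hcomp : DifferentiableAt ℝ (fun x => H (fun j => g j (x j))) y :=
    hH.comp y (differentiableAt_pi.2 fun j => (hg j).comp y (differentiableAt_apply j y))
  have hslice : DifferentiableAt ℝ (fun t => H (update G i t)) (g i (y i)) := by
    refine DifferentiableAt.comp _ ?_ (hasDerivAt_update G i _).differentiableAt
    rwa [show update G i (g i (y i)) = G from update_eq_self i G]
  have hupdate : ∀ t, (fun j => g j (update y i t j)) = update G i (g i t) := fun t =>
    funext fun j => apply_update g y i t j
  rw [pder_eq_deriv_update hcomp, pder_eq_deriv_update hH]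
  simp only [hupdate]
  exact deriv_comp (h₂ := fun t => H (update G i t)) (y i) hslice (hg i)

theorem contDiff_pder {f : (Fin d → ℝ) → ℝ} (hf : ContDiff ℝ ∞ f) (i : Fin d) :
    ContDiff ℝ ∞ (pder i f) :=
  (contDiff_infty_iff_fderiv.1 hf).2.clm_apply contDiff_const

theorem contDiff_foldr_pder {f : (Fin d → ℝ) → ℝ} (hf : ContDiff ℝ ∞ f) (l : List (Fin d)) :
    ContDiff ℝ ∞ (l.foldr pder f) := by
  induction l with
  | nil => exact hf
  | cons i l ih => exact contDiff_pder ih i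

theorem foldr_pder_comp_coordwise {s : (Fin d → ℝ) → ℝ} (hs : ContDiff ℝ ∞ s)
    {g : Fin d → ℝ → ℝ} (hg : ∀ i, ContDiff ℝ ∞ (g i)) {l : List (Fin d)} (hl : l.Nodup)
    (y : Fin d → ℝ) :
    l.foldr pder (fun x => s fun j => g j (x j)) y =
      l.foldr pder s (fun j => g j (y j)) * ∏ j ∈ l.toFinset, deriv (g j) (y j) := by
  induction l generalizing y with
  | nil => simp
  | cons i l ih =>
    obtain ⟨hi, hl⟩ := List.nodup_cons.1 hl
    have hG : ContDiff ℝ ∞ fun (x : Fin d → ℝ) j => g j (x j) :=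
      contDiff_pi.2 fun j => (hg j).comp (contDiff_apply ℝ ℝ j)
    have hH : ContDiff ℝ ∞ (l.foldr pder s) := contDiff_foldr_pder hs l
    have hP : ContDiff ℝ ∞ fun x : Fin d → ℝ => ∏ j ∈ l.toFinset, deriv (g j) (x j) :=
      contDiff_prod fun j _ =>
        (contDiff_infty_iff_deriv.1 (hg j)).2.comp (contDiff_apply ℝ ℝ j)
    have hP_indep : ∀ t, ∏ j ∈ l.toFinset, deriv (g j) (update y i t j) =
        ∏ j ∈ l.toFinset, deriv (g j) (y j) := fun t =>
      Finset.prod_congr rfl fun j hj => by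
        rw [update_of_ne (ne_of_mem_of_not_mem (List.mem_toFinset.1 hj) hi)]
    have hHG : ContDiff ℝ ∞ fun x : Fin d → ℝ => l.foldr pder s fun j => g j (x j) :=
      hH.comp hG
    rw [List.foldr_cons, funext (ih hl), pder_mul (hHG.differentiable (by simp) y)
      (hP.differentiable (by simp) y), pder_eq_zero_of_forall_update_eq
        (f := fun x => ∏ j ∈ l.toFinset, deriv (g j) (x j)) i hP_indep,
      pder_comp_coordwise (hH.differentiable (by simp) _)
        (fun j => (hg j).differentiable (by simp) _),
      List.toFinset_cons, Finset.prod_insert (by simpa using hi), List.foldr_cons]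
    ring

end

theorem mixedDer_comp_general (d : ℕ) (s : (Fin d → ℝ) → ℝ)
    (hs : ContDiff ℝ (⊤ : ℕ∞) s)
    (hpde : ∀ x, mixedDer s x = ∏ i : Fin d, pder i s x)
    (g : Fin d → ℝ → ℝ) (hg : ∀ i, ContDiff ℝ (⊤ : ℕ∞) (g i)) :
    ∀ x : Fin d → ℝ,
      mixedDer (fun y => s (fun i => g i (y i))) x =
        ∏ i : Fin d, pder i (fun y => s (fun j => g j (y j))) x := by
  intro x
  have hfactor : ∀ i, pder i (fun y => s fun j => g j (y j)) x =
      pder i s (fun j => g j (x j)) * deriv (g i) (x i) := fun i =>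
    pder_comp_coordwise (hs.differentiable (by simp) _)
      (fun j => (hg j).differentiable (by simp) _) i
  rw [mixedDer, foldr_pder_comp_coordwise hs hg (List.nodup_finRange d),
    List.toFinset_finRange, ← mixedDer, hpde, Finset.prod_congr rfl fun i _ => hfactor i,
    Finset.prod_mul_distrib]

/-- If a smooth `s : ℝ^d → ℝ` satisfies `∂_1⋯∂_d s = ∏_i ∂_i s`, then for
all smooth `s_1,…,s_d : ℝ → ℝ`, the function `u(x) = s(s_1(x_1),…,s_d(x_d))` satisfies the
same equation. -/
theorem mixedDer_comp (d : ℕ) (hd : 2 ≤ d) (s : (Fin d → ℝ) → ℝ)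
    (hs : ContDiff ℝ (⊤ : ℕ∞) s)
    (hpde : ∀ x, mixedDer s x = ∏ i : Fin d, pder i s x)
    (g : Fin d → ℝ → ℝ) (hg : ∀ i, ContDiff ℝ (⊤ : ℕ∞) (g i)) :
    ∀ x : Fin d → ℝ,
      mixedDer (fun y => s (fun i => g i (y i))) x =
        ∏ i : Fin d, pder i (fun y => s (fun j => g j (y j))) x :=
  mixedDer_comp_general d s hs hpde g hg
end
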